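/- arXiv:1711.03363 — 7 statements merged into one kernel-verified Lean document; each statement's English description precedes it below -/
import Mathlib

section
/- Let u be a nonempty string of length k over alphabet Σ. The number of distinct window profiles with respect to u is at most k, where a window profile of position i in a nonempty string v is the vector W ∈ {⊥,⊤}^(k-1) with W[j] = ⊤ iff the j characters of v ending at position i equal the first j characters of u (with W[j] = ⊥ when j > i). -/
/-- The window profile of position `i` (1-indexed) in a string `v` with respect to
a string `u` of length `k`: the vector `W ∈ Bool^(k-1)` whose `j`-th component
(for `j ∈ [k-1]`, encoded by `Fin (k-1)` with value `j = (⟨j-1⟩ : Fin (k-1)) + 1`)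
is `⊤` iff the `j` characters of `v` ending at position `i` equal the first `j`
characters of `u` (and `⊥` whenever `j > i`). -/
def windowProfile {A : Type*} [DecidableEq A] (u v : List A) (i : ℕ) :
    Fin (u.length - 1) → Bool :=
  fun j => decide ((j : ℕ) + 1 ≤ i ∧ (v.take i).drop (i - ((j : ℕ) + 1)) = u.take ((j : ℕ) + 1))

/-- The set of all window profiles of positions in nonempty strings w.r.t. `u`. -/
def WProf {A : Type*} [DecidableEq A] (u : List A) : Set (Fin (u.length - 1) → Bool) :=
  {W | ∃ (v : List A) (i : ℕ), v ≠ [] ∧ 1 ≤ i ∧ i ≤ v.length ∧ W = windowProfile u v i}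

/-- The number of distinct window profiles w.r.t. a nonempty string `u` of length `k`
is at most `k`. -/
theorem card_windowProfiles_le {A : Type*} [DecidableEq A] (u : List A) (hu : u ≠ []) :
    (WProf u).ncard ≤ u.length := by
  classical
  have hk1 : 1 ≤ u.length := List.length_pos_iff.mpr hu
  have key : WProf u ⊆ (fun m => windowProfile u u m) '' (Set.Iio u.length) := by
    rintro W ⟨v, i, hv, hi1, hi2, rfl⟩
    set k := u.length with hk
    set P : ℕ → Prop := fun t => t ≤ i ∧ t ≤ k - 1 ∧ (v.take i).drop (i - t) = u.take t
      with hPdef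
    have hP0 : P 0 := by
      refine ⟨Nat.zero_le _, Nat.zero_le _, ?_⟩
      have : (v.take i).length ≤ i - 0 := by
        simp [List.length_take]
      simp [List.drop_eq_nil_of_le this]
    set m := Nat.findGreatest P (k - 1) with hm
    have hQm : P m := Nat.findGreatest_spec (Nat.zero_le _) hP0
    obtain ⟨hmi, hmk, hPm⟩ := hQm
    refine ⟨m, by simpa using lt_of_le_of_lt (Nat.findGreatest_le (P := P) (k - 1)) (by omega), ?_⟩
    have hdrop : ∀ t, t ≤ m → (v.take i).drop (i - t) = (u.take m).drop (m - t) := by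
      intro t ht
      rw [← hPm, List.drop_drop]
      congr 1
      omega
    funext j
    have hj : (j : ℕ) < k - 1 := j.isLt
    show decide _ = decide _
    rw [decide_eq_decide]
    constructor
    · rintro ⟨h1, h2⟩
      refine ⟨by omega, ?_⟩
      rw [← hdrop _ h1] at h2
      exact h2
    · rintro ⟨h1, h2⟩
      have hPj : P ((j : ℕ) + 1) := ⟨h1, by omega, h2⟩
      have hjm : (j : ℕ) + 1 ≤ m := Nat.le_findGreatest (by omega) hPj
      exact ⟨hjm, by rw [← hdrop _ hjm]; exact h2⟩
  calc (WProf u).ncard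
      ≤ ((fun m => windowProfile u u m) '' (Set.Iio u.length)).ncard :=
        Set.ncard_le_ncard key ((Set.finite_Iio _).image _)
    _ ≤ (Set.Iio u.length).ncard := Set.ncard_image_le (Set.finite_Iio _)
    _ = u.length := by rw [← Finset.coe_range, Set.ncard_coe_finset, Finset.card_range]
end

section
/- The map sending each window profile W (w.r.t. a fixed nonempty string u of length k) to idx(W), defined as the maximum index j ∈ [k-1] with W[j] = ⊤ (or 0 if no such index exists), is injective from the set of window profiles into {0, 1, ..., k-1}. -/
/-- `idx W` is the maximum index `j ∈ [k-1]` with `W[j] = ⊤`, or `0` if there is none. -/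
def idxOfProfile {k : ℕ} (W : Fin (k - 1) → Bool) : ℕ :=
  (Finset.univ.filter fun j : Fin (k - 1) => W j = true).sup (fun j => (j : ℕ) + 1)

/-- Canonical profile determined by `u` and the index `m`. -/
def canonProfile {A : Type*} [DecidableEq A] (u : List A) (m : ℕ) :
    Fin (u.length - 1) → Bool :=
  fun j => decide ((j : ℕ) + 1 ≤ m ∧ (u.take m).drop (m - ((j : ℕ) + 1)) = u.take ((j : ℕ) + 1))

lemma windowProfile_eq_canon {A : Type*} [DecidableEq A] (u v : List A) (i : ℕ) :
    windowProfile u v i = canonProfile u (idxOfProfile (windowProfile u v i)) := by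
  set W := windowProfile u v i with hW
  set m := idxOfProfile W with hm
  funext j
  by_cases hj : (j : ℕ) + 1 ≤ m
  · -- sup is attained
    have hne : (Finset.univ.filter fun j : Fin (u.length - 1) => W j = true).Nonempty := by
      by_contra h
      rw [Finset.not_nonempty_iff_eq_empty] at h
      have : m = 0 := by rw [hm, idxOfProfile, h]; simp
      omega
    obtain ⟨j₀, hj₀mem, hj₀⟩ :=
      Finset.exists_mem_eq_sup _ hne (fun j : Fin (u.length - 1) => (j : ℕ) + 1)
    have hmj : m = (j₀ : ℕ) + 1 := by rw [hm, idxOfProfile, hj₀]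
    have hW0 : W j₀ = true := (Finset.mem_filter.mp hj₀mem).2
    rw [hW] at hW0
    simp only [windowProfile, decide_eq_true_eq] at hW0
    obtain ⟨hmi, hwin⟩ := hW0
    rw [← hmj] at hmi hwin
    -- hmi : m ≤ i, hwin : (v.take i).drop (i - m) = u.take m
    have hdrop : (v.take i).drop (i - ((j : ℕ) + 1)) = (u.take m).drop (m - ((j : ℕ) + 1)) := by
      rw [← hwin, List.drop_drop]
      congr 1
      omega
    show W j = canonProfile u m j
    rw [hW]
    simp only [windowProfile, canonProfile, hdrop]
    have hji : (j : ℕ) + 1 ≤ i := le_trans hj hmi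
    simp [hji, hj]
  · -- W j = false since m is the sup
    have hWj : W j = false := by
      by_contra h
      have h' : W j = true := by simpa using h
      have : (j : ℕ) + 1 ≤ m := by
        rw [hm, idxOfProfile]
        exact Finset.le_sup (f := fun j : Fin (u.length - 1) => (j : ℕ) + 1) (Finset.mem_filter.mpr ⟨Finset.mem_univ _, h'⟩)
      omega
    show W j = canonProfile u m j
    rw [hWj, canonProfile]
    symm
    simp only [decide_eq_false_iff_not]
    intro h
    exact hj h.1

/-- The map `W ↦ idx(W)` is injective on the set of window profiles w.r.t. a fixed
nonempty string `u` of length `k`; its values lie in `{0, 1, …, k-1}`. -/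
theorem idx_injective_on_windowProfiles {A : Type*} [DecidableEq A] (u : List A)
    (hu : u ≠ []) :
    Set.InjOn (idxOfProfile (k := u.length)) (WProf u) ∧
      ∀ W ∈ WProf u, idxOfProfile (k := u.length) W ≤ u.length - 1 := by
  constructor
  · rintro W₁ ⟨v₁, i₁, -, -, -, rfl⟩ W₂ ⟨v₂, i₂, -, -, -, rfl⟩ h
    rw [windowProfile_eq_canon u v₁ i₁, windowProfile_eq_canon u v₂ i₂, h]
  · rintro W -
    apply Finset.sup_le
    intro j _
    have := j.isLt
    omega
end

section
/- Let u, v be strings over Σ and e a regular language with ε ∉ e. If v = v₁ u v₂ and u is the leftmost and longest matching of e in v, then this decomposition is unique: if v = v₁' u' v₂' and u' is also the leftmost and longest matching of e in v, then v₁ = v₁', u = u', and v₂ = v₂'. -/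
/-- `u` is the leftmost and longest matching of the language `e` (with `ε ∉ e`)
in `v = v₁ ++ u ++ v₂`:
(leftmost) `u ∈ e` and for every strict prefix `w` of `v₁`, the string `w⁻¹v`
is not in `e · Σ*`; (longest) for every nonempty prefix `p` of `v₂`, `u ++ p ∉ e`. -/
def IsLLMatch {A : Type*} (e : Language A) (v v₁ u v₂ : List A) : Prop :=
  v = v₁ ++ u ++ v₂ ∧ u ∈ e ∧
    (∀ w, w <+: v₁ → w ≠ v₁ → ¬ ∃ s t, s ∈ e ∧ v = w ++ s ++ t) ∧
    (∀ p, p <+: v₂ → p ≠ [] → u ++ p ∉ e)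

/-- Uniqueness of the leftmost-and-longest decomposition for a regular language `e`
with `ε ∉ e`. -/
theorem llmatch_unique {A : Type*} (e : Language A)
    (hreg : ∃ r : RegularExpression A, e = r.matches') (hε : ([] : List A) ∉ e)
    (v v₁ u v₂ v₁' u' v₂' : List A)
    (h : IsLLMatch e v v₁ u v₂) (h' : IsLLMatch e v v₁' u' v₂') :
    v₁ = v₁' ∧ u = u' ∧ v₂ = v₂' := by
  obtain ⟨hv, hu, hlm, hlg⟩ := h
  obtain ⟨hv', hu', hlm', hlg'⟩ := h'
  have hp1 : v₁ <+: v := ⟨u ++ v₂, by simp [hv]⟩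
  have hp1' : v₁' <+: v := ⟨u' ++ v₂', by simp [hv']⟩
  have h1 : v₁ = v₁' := by
    rcases List.prefix_or_prefix_of_prefix hp1 hp1' with hle | hle
    · by_contra hne
      exact hlm' v₁ hle hne ⟨u, v₂, hu, hv⟩
    · by_contra hne
      exact hlm v₁' hle (fun e => hne e.symm) ⟨u', v₂', hu', hv'⟩
  subst h1
  have h2 : u ++ v₂ = u' ++ v₂' := by
    have := hv.symm.trans hv'
    simpa using this
  have hu1 : u <+: u ++ v₂ := ⟨v₂, rfl⟩
  have hu2 : u' <+: u ++ v₂ := ⟨v₂', h2.symm⟩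
  have h3 : u = u' := by
    rcases List.prefix_or_prefix_of_prefix hu1 hu2 with hle | hle
    · by_contra hne
      obtain ⟨p, hp⟩ := hle
      have hpne : p ≠ [] := by rintro rfl; exact hne (by simp [← hp])
      have hv2 : v₂ = p ++ v₂' := by
        have : u ++ v₂ = u ++ (p ++ v₂') := by rw [h2, ← hp]; simp
        exact (List.append_cancel_left this)
      exact hlg p ⟨v₂', hv2.symm⟩ hpne (by rw [hp]; exact hu')
    · by_contra hne
      obtain ⟨p, hp⟩ := hle
      have hpne : p ≠ [] := by rintro rfl; exact hne (by simp [← hp])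
      have hv2 : v₂' = p ++ v₂ := by
        have : u' ++ v₂' = u' ++ (p ++ v₂) := by rw [← h2, ← hp]; simp
        exact (List.append_cancel_left this)
      exact hlg' p ⟨v₂, hv2.symm⟩ hpne (by rw [hp]; exact hu)
  subst h3
  exact ⟨rfl, rfl, List.append_cancel_left h2⟩
end

section
/- Let A₁ = (Q₁, δ₁, q₀, F₁) be an NFA, a ∈ Σ, and T ⊆ Q₁ × Q₁. Let B be the NFA obtained from A₁ by removing all a-transitions and adding transitions (q, a, q') for each (q, q') ∈ T. Suppose v = v₁ a v₂ a ⋯ a v_k with each v_i ∈ (Σ\{a})*, v is accepted by B, and w is a string with w ∈ L(A₁(q, q')) for every (q, q') ∈ T (where A₁(q,q') is A₁ with initial state q and final states {q'}). Then replaceall(v, a, w) = v₁ w v₂ ⋯ w v_k is accepted by A₁. -/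
/-- A nondeterministic finite automaton `(Q, δ, q₀, F)` with states `σ` and
alphabet `A`: transition relation `δ ⊆ Q × A × Q`, initial state and final states. -/
structure NFA' (A σ : Type*) where
  trans : Set (σ × A × σ)
  start : σ
  accept : Set σ

/-- `Steps δ q w q'`: the transition relation `δ` can read the word `w` going
from state `q` to state `q'`. -/
inductive Steps {A σ : Type*} (δ : Set (σ × A × σ)) : σ → List A → σ → Prop
  | nil (q : σ) : Steps δ q [] q
  | cons {q q' q'' : σ} {a : A} {w : List A} :
      (q, a, q') ∈ δ → Steps δ q' w q'' → Steps δ q (a :: w) q''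

/-- The word `w` is accepted by the NFA `M`. -/
def NFA'.Accepts {A σ : Type*} (M : NFA' A σ) (w : List A) : Prop :=
  ∃ f ∈ M.accept, Steps M.trans M.start w f

/-- `B_{M,a,T}`: the NFA obtained from `M` by removing all `a`-transitions and
adding the transitions `(q, a, q')` for each `(q, q') ∈ T`. -/
def modNFA {A σ : Type*} (M : NFA' A σ) (a : A) (T : Set (σ × σ)) : NFA' A σ :=
  { trans := {t | t ∈ M.trans ∧ t.2.1 ≠ a} ∪ {t | t.2.1 = a ∧ (t.1, t.2.2) ∈ T},
    start := M.start, accept := M.accept }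

/-- `replaceAllChar a v u` replaces every occurrence of the letter `a` in `u` by `v`. -/
def replaceAllChar {A : Type*} [DecidableEq A] (a : A) (v : List A) : List A → List A
  | [] => []
  | b :: u => (if b = a then v else [b]) ++ replaceAllChar a v u

lemma steps_append {A σ : Type*} {δ : Set (σ × A × σ)} {q q' q'' : σ} {u v : List A}
    (h1 : Steps δ q u q') (h2 : Steps δ q' v q'') : Steps δ q (u ++ v) q'' := by
  induction h1 with
  | nil => simpa
  | cons ht _ ih => exact Steps.cons ht (ih h2)

lemma replaceAllChar_append {A : Type*} [DecidableEq A] (a : A) (w u v : List A) :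
    replaceAllChar a w (u ++ v) = replaceAllChar a w u ++ replaceAllChar a w v := by
  induction u with
  | nil => rfl
  | cons b u ih => simp [replaceAllChar, ih]

lemma replaceAllChar_of_not_mem {A : Type*} [DecidableEq A] {a : A} (w : List A)
    {u : List A} (h : a ∉ u) : replaceAllChar a w u = u := by
  induction u with
  | nil => rfl
  | cons b u ih =>
    simp only [List.mem_cons, not_or] at h
    simp [replaceAllChar, Ne.symm h.1, ih h.2]

lemma steps_mod {A σ : Type*} [DecidableEq A] {M : NFA' A σ} {a : A} {T : Set (σ × σ)}
    {w : List A} (hw : ∀ p ∈ T, Steps M.trans p.1 w p.2) {q q' : σ} {u : List A}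
    (h : Steps (modNFA M a T).trans q u q') :
    Steps M.trans q (replaceAllChar a w u) q' := by
  induction h with
  | nil => exact Steps.nil _
  | @cons q q' q'' b u ht _ ih =>
    rcases ht with ⟨ht, hb⟩ | ⟨hb, ht⟩
    · simp only [replaceAllChar, if_neg hb]
      exact Steps.cons ht ih
    · simp only [replaceAllChar, if_pos hb]
      subst hb
      exact steps_append (hw _ ht) ih

/-- If `v = v₁ a v₂ a ⋯ a v_k` (each `v_i` free of `a`) is accepted by `B_{M,a,T}`
and `w ∈ L(M(q,q'))` for every `(q,q') ∈ T`, then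
`replaceall(v, a, w) = v₁ w v₂ ⋯ w v_k` is accepted by `M`. -/
theorem accepted_of_modNFA {A σ : Type*} [DecidableEq A]
    (M : NFA' A σ) (a : A) (T : Set (σ × σ)) (vs : List (List A)) (w : List A)
    (hk : vs ≠ []) (hvs : ∀ vi ∈ vs, a ∉ vi)
    (hv : (modNFA M a T).Accepts (List.intercalate [a] vs))
    (hw : ∀ p ∈ T, Steps M.trans p.1 w p.2) :
    M.Accepts (replaceAllChar a w (List.intercalate [a] vs)) ∧
      replaceAllChar a w (List.intercalate [a] vs) = List.intercalate w vs := by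
  have heq : replaceAllChar a w (List.intercalate [a] vs) = List.intercalate w vs := by
    clear hv hk
    induction vs with
    | nil => rfl
    | cons v vs ih =>
      cases vs with
      | nil => simp [List.intercalate, replaceAllChar_of_not_mem w (hvs v (by simp))]
      | cons v' vs' =>
        have h1 : List.intercalate [a] (v :: v' :: vs') =
            v ++ [a] ++ List.intercalate [a] (v' :: vs') := by
          simp [List.intercalate, List.intersperse]
        have h2 : List.intercalate w (v :: v' :: vs') =
            v ++ w ++ List.intercalate w (v' :: vs') := by
          simp [List.intercalate, List.intersperse]
        rw [h1, h2, replaceAllChar_append, replaceAllChar_append,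
          replaceAllChar_of_not_mem w (hvs v (by simp)),
          ih (fun vi hvi => hvs vi (List.mem_cons_of_mem _ hvi))]
        simp [replaceAllChar]
  refine ⟨?_, heq⟩
  obtain ⟨f, hf, hs⟩ := hv
  exact ⟨f, hf, steps_mod hw hs⟩
end

section
/- Conversely: let A₁ be an NFA and a ∈ Σ. If u = replaceall(v, a, w) is accepted by A₁, where v = v₁ a v₂ a ⋯ a v_k with each v_i ∈ (Σ\{a})*, then there exists T ⊆ Q₁ × Q₁ such that w ∈ L(A₁(q, q')) for every (q, q') ∈ T and v is accepted by B_{A₁,a,T}. -/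

theorem Steps.append_split {A σ : Type*} {δ : Set (σ × A × σ)} :
    ∀ {x : List A} {y : List A} {q q' : σ}, Steps δ q (x ++ y) q' →
      ∃ m, Steps δ q x m ∧ Steps δ m y q'
  | [], _, q, _, h => ⟨q, Steps.nil q, h⟩
  | _ :: _, _, _, _, h => by
    cases h with
    | cons hb hrest =>
      obtain ⟨m, h1, h2⟩ := Steps.append_split hrest
      exact ⟨m, Steps.cons hb h1, h2⟩

theorem steps_replace {A σ : Type*} [DecidableEq A] {δ : Set (σ × A × σ)} {a : A} {w : List A} :
    ∀ {u : List A} {q q' : σ}, Steps δ q (replaceAllChar a w u) q' →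
      Steps ({t | t ∈ δ ∧ t.2.1 ≠ a} ∪ {t | t.2.1 = a ∧ Steps δ t.1 w t.2.2}) q u q'
  | [], q, q', h => by
      rw [replaceAllChar] at h
      cases h; exact Steps.nil _
  | b :: u, q, q', h => by
      rw [replaceAllChar] at h
      by_cases hb : b = a
      · subst hb
        rw [if_pos rfl] at h
        obtain ⟨m, h1, h2⟩ := Steps.append_split h
        exact Steps.cons (Or.inr ⟨rfl, h1⟩) (steps_replace h2)
      · rw [if_neg hb] at h
        cases h with
        | cons hb' hrest =>
          exact Steps.cons (Or.inl ⟨hb', hb⟩) (steps_replace hrest)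

/-- Conversely: if `replaceall(v, a, w)` is accepted by `M`, where
`v = v₁ a v₂ a ⋯ a v_k` with each `v_i` free of `a`, then there is a set
`T ⊆ Q × Q` such that `w ∈ L(M(q,q'))` for every `(q,q') ∈ T` and `v` is
accepted by `B_{M,a,T}`. -/
theorem modNFA_of_accepted {A σ : Type*} [DecidableEq A]
    (M : NFA' A σ) (a : A) (vs : List (List A)) (w : List A)
    (hk : vs ≠ []) (hvs : ∀ vi ∈ vs, a ∉ vi)
    (hu : M.Accepts (replaceAllChar a w (List.intercalate [a] vs))) :
    ∃ T : Set (σ × σ), (∀ p ∈ T, Steps M.trans p.1 w p.2) ∧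
      (modNFA M a T).Accepts (List.intercalate [a] vs) := by
  obtain ⟨f, hf, hsteps⟩ := hu
  exact ⟨{p | Steps M.trans p.1 w p.2}, fun p hp => hp, f, hf, steps_replace hsteps⟩
end

section
/- Post's Correspondence Problem reduces to satisfiability of straight-line string constraints with replaceall where the pattern may be a variable: given nonempty strings α₁,…,α_N and β₁,…,β_N over Σ, the PCP instance has a solution iff the formula ⋀_{i∈[N]} (x_i = replaceall(x_{i-1}, i, α_i) ∧ y_i = replaceall(y_{i-1}, i, β_i)) ∧ z = replaceall(x_N, y_N, $) ∧ x₀ = y₀ ∧ x₀ ∈ (1+⋯+N)⁺ ∧ z ∈ {$} is satisfiable, where the index letters 1,…,N and $ are fresh symbols not in Σ. -/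
/-- `replaceAllStr p v u` replaces every (leftmost) occurrence of the constant
pattern string `p` in `u` by `v`. -/
def replaceAllStr {A : Type*} [DecidableEq A] (p v u : List A) : List A :=
  match p, u with
  | [], u => u
  | _ :: _, [] => []
  | q :: p', b :: u' =>
      if (q :: p') <+: (b :: u') then
        v ++ replaceAllStr (q :: p') v ((b :: u').drop (p'.length + 1))
      else b :: replaceAllStr (q :: p') v u'
termination_by u.length
decreasing_by
  · simp only [List.length_drop, List.length_cons]; omega
  · simp only [List.length_cons]; omega

/-!
Substituting the index letters `0, …, N-1` one after the other into an index word
`i₁ ⋯ i_K` passes through the words in which the letters `< k` are already replaced and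
ends with `α_{i₁} ⋯ α_{i_K}`, so `x_N` and `y_N` are the two sides of the PCP equation for
the index word `x₀ = y₀`. As `x_N` contains no `$`, `replaceall(x_N, y_N, $) = $` forces
`x_N = y_N`, and conversely it holds whenever `x_N = y_N` is nonempty.
-/

section ReplaceAll

variable {A : Type*} [DecidableEq A]

@[simp]
lemma replaceAllStr_nil_left (v u : List A) : replaceAllStr [] v u = u := by
  rw [replaceAllStr]

@[simp]
lemma replaceAllStr_cons_nil (q : A) (p v : List A) : replaceAllStr (q :: p) v [] = [] := by
  rw [replaceAllStr]

lemma replaceAllStr_singleton (a : A) (v u : List A) :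
    replaceAllStr [a] v u = u.flatMap fun c => if c = a then v else [c] := by
  induction u with
  | nil => simp
  | cons b u ih =>
    rw [replaceAllStr, List.flatMap_cons]
    by_cases h : b = a
    · subst h
      simp [ih]
    · rw [if_neg (by simp [Ne.symm h]), if_neg h, ih]
      rfl

lemma replaceAllStr_self {u : List A} (hu : u ≠ []) (v : List A) : replaceAllStr u v u = v := by
  obtain ⟨q, p, rfl⟩ := List.exists_cons_of_ne_nil hu
  rw [replaceAllStr, if_pos (List.prefix_refl _), List.drop_of_length_le (by simp),
    replaceAllStr_cons_nil, List.append_nil]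

lemma replaceAllStr_ne_nil (p : List A) {v u : List A} (hv : v ≠ []) (hu : u ≠ []) :
    replaceAllStr p v u ≠ [] := by
  match p, u with
  | [], _ => simpa using hu
  | q :: p', b :: u' =>
    rw [replaceAllStr]
    split
    · simp [hv]
    · simp

lemma eq_of_replaceAllStr_eq_singleton {p u : List A} {d : A} (hd : d ∉ u)
    (h : replaceAllStr p [d] u = [d]) : u = p := by
  match p, u with
  | [], _ => simp_all
  | _ :: _, [] => simp at h
  | q :: p', b :: u' =>
    rw [replaceAllStr] at h
    split at h
    · next hpre =>
      have hrest : (b :: u').drop (p'.length + 1) = [] := by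
        by_contra hne
        exact replaceAllStr_ne_nil _ (List.cons_ne_nil d []) hne (by simpa using h)
      have hlen : (b :: u').length ≤ (q :: p').length := by
        simpa using List.drop_eq_nil_iff.mp hrest
      exact (hpre.eq_of_length (le_antisymm hpre.length_le hlen)).symm
    · simp only [List.cons.injEq] at h
      exact absurd (h.1 ▸ List.mem_cons_self) hd

end ReplaceAll

section PartialSubstitution

variable {S : Type*} {N : ℕ}

def partialSubst (γ : Fin N → List S) (k : ℕ) (is : List (Fin N)) :
    List (S ⊕ (Fin N ⊕ Unit)) :=
  is.flatMap fun i => if i.val < k then (γ i).map Sum.inl else [Sum.inr (Sum.inl i)]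

lemma partialSubst_zero (γ : Fin N → List S) (is : List (Fin N)) :
    partialSubst γ 0 is = is.map fun i => Sum.inr (Sum.inl i) := by
  simp [partialSubst, List.map_eq_flatMap]

lemma partialSubst_of_le (γ : Fin N → List S) {k : ℕ} (hk : N ≤ k) (is : List (Fin N)) :
    partialSubst γ k is = (is.map γ).flatten.map Sum.inl := by
  rw [← List.flatMap_def, List.map_flatMap, partialSubst]
  exact List.flatMap_congr fun i _ => if_pos (by omega)

lemma replaceAllStr_partialSubst [DecidableEq S] (γ : Fin N → List S) (k : Fin N)
    (is : List (Fin N)) :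
    replaceAllStr [Sum.inr (Sum.inl k)] ((γ k).map Sum.inl) (partialSubst γ k is) =
      partialSubst γ (k + 1) is := by
  rw [replaceAllStr_singleton, partialSubst, List.flatMap_assoc, partialSubst]
  refine List.flatMap_congr fun i _ => ?_
  rcases lt_trichotomy i k with hlt | rfl | hgt
  · have hlt' : i.val < k := hlt
    simp [hlt', show i.val < k + 1 by omega, List.flatMap_map, ← List.map_eq_flatMap]
  · simp
  · have hgt' : k.val < i := hgt
    simp [hgt.ne', show ¬ i.val < k by omega, show ¬ i.val < k + 1 by omega]

lemma eq_partialSubst_of_chain [DecidableEq S] (γ : Fin N → List S) (is : List (Fin N))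
    (x : Fin (N + 1) → List (S ⊕ (Fin N ⊕ Unit)))
    (h0 : x 0 = is.map fun i => Sum.inr (Sum.inl i))
    (hstep : ∀ i : Fin N,
      x i.succ = replaceAllStr [Sum.inr (Sum.inl i)] ((γ i).map Sum.inl) (x i.castSucc))
    (k : Fin (N + 1)) : x k = partialSubst γ k is := by
  induction k using Fin.induction with
  | zero => rw [h0, Fin.val_zero, partialSubst_zero]
  | succ i ih => rw [hstep, ih, Fin.val_succ, Fin.val_castSucc, replaceAllStr_partialSubst]

end PartialSubstitution

theorem pcp_reduces_to_replaceall_general {S : Type*} [DecidableEq S] (N : ℕ)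
    (α β : Fin N → List S) (hβ : ∀ i, β i ≠ []) :
    (∃ is : List (Fin N), is ≠ [] ∧
        (is.map α).flatten = (is.map β).flatten) ↔
      (∃ (x y : Fin (N + 1) → List (S ⊕ (Fin N ⊕ Unit))) (z : List (S ⊕ (Fin N ⊕ Unit))),
        (∀ i : Fin N,
          x i.succ = replaceAllStr [Sum.inr (Sum.inl i)] ((α i).map Sum.inl) (x i.castSucc) ∧
          y i.succ = replaceAllStr [Sum.inr (Sum.inl i)] ((β i).map Sum.inl) (y i.castSucc)) ∧
        z = replaceAllStr (y (Fin.last N)) [Sum.inr (Sum.inr ())] (x (Fin.last N)) ∧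
        x 0 = y 0 ∧
        (x 0 ≠ [] ∧ ∀ c ∈ x 0, ∃ i : Fin N, c = Sum.inr (Sum.inl i)) ∧
        z = [Sum.inr (Sum.inr ())]) := by
  constructor
  · rintro ⟨is, his, heq⟩
    have hβne : (is.map β).flatten.map (Sum.inl : S → S ⊕ (Fin N ⊕ Unit)) ≠ [] := by
      obtain ⟨j, hj⟩ := List.exists_mem_of_ne_nil is his
      simpa using ⟨j, hj, hβ j⟩
    refine ⟨fun k => partialSubst α k is, fun k => partialSubst β k is, _,
      fun i => ⟨(replaceAllStr_partialSubst α i is).symm,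
        (replaceAllStr_partialSubst β i is).symm⟩, rfl, rfl,
      ⟨by simpa [partialSubst_zero] using his, by simp [partialSubst_zero]⟩, ?_⟩
    simp only [Fin.val_last, partialSubst_of_le _ le_rfl, heq]
    exact replaceAllStr_self hβne _
  · rintro ⟨x, y, z, hstep, rfl, hxy0, ⟨hx0, hx0_idx⟩, hz⟩
    obtain ⟨is, his⟩ : x 0 ∈ Set.range (List.map fun i : Fin N => Sum.inr (Sum.inl i)) := by
      rw [Set.range_list_map]
      exact fun c hc => (hx0_idx c hc).imp fun i hi => hi.symm
    have hxN := eq_partialSubst_of_chain α is x his.symm (fun i => (hstep i).1) (Fin.last N)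
    have hyN := eq_partialSubst_of_chain β is y (hxy0 ▸ his.symm) (fun i => (hstep i).2)
      (Fin.last N)
    rw [Fin.val_last, partialSubst_of_le _ le_rfl] at hxN hyN
    have hdollar : Sum.inr (Sum.inr ()) ∉ x (Fin.last N) := by simp [hxN]
    refine ⟨is, by rintro rfl; simp_all, 
      List.map_injective_iff.mpr (Sum.inl_injective (β := Fin N ⊕ Unit)) ?_⟩
    rw [← hxN, ← hyN]
    exact eq_of_replaceAllStr_eq_singleton hdollar hz

/-- Post's Correspondence Problem reduces to satisfiability of straight-line
string constraints with `replaceall` where the pattern may be a variable.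
The alphabet `Σ` is extended with fresh index letters `1,…,N` (`Sum.inr (Sum.inl i)`)
and `$` (`Sum.inr (Sum.inr ())`).  The PCP instance `α, β` has a solution iff the
formula `⋀_{i∈[N]} (xᵢ = replaceall(xᵢ₋₁, i, αᵢ) ∧ yᵢ = replaceall(yᵢ₋₁, i, βᵢ)) ∧
z = replaceall(x_N, y_N, $) ∧ x₀ = y₀ ∧ x₀ ∈ (1+⋯+N)⁺ ∧ z ∈ {$}` is satisfiable. -/
theorem pcp_reduces_to_replaceall {S : Type*} [DecidableEq S] (N : ℕ)
    (α β : Fin N → List S) (hα : ∀ i, α i ≠ []) (hβ : ∀ i, β i ≠ []) :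
    (∃ is : List (Fin N), is ≠ [] ∧
        (is.map α).flatten = (is.map β).flatten) ↔
      (∃ (x y : Fin (N + 1) → List (S ⊕ (Fin N ⊕ Unit))) (z : List (S ⊕ (Fin N ⊕ Unit))),
        (∀ i : Fin N,
          x i.succ = replaceAllStr [Sum.inr (Sum.inl i)] ((α i).map Sum.inl) (x i.castSucc) ∧
          y i.succ = replaceAllStr [Sum.inr (Sum.inl i)] ((β i).map Sum.inl) (y i.castSucc)) ∧
        z = replaceAllStr (y (Fin.last N)) [Sum.inr (Sum.inr ())] (x (Fin.last N)) ∧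
        x 0 = y 0 ∧
        (x 0 ≠ [] ∧ ∀ c ∈ x 0, ∃ i : Fin N, c = Sum.inr (Sum.inl i)) ∧
        z = [Sum.inr (Sum.inr ())]) :=
  pcp_reduces_to_replaceall_general N α β hβ
end

section
/- In a DAG G = (V, E) in which every vertex has out-degree at most 2 and whose diamond index is bounded by d, the number of distinct paths between any two fixed distinct vertices z and z' is at most (|V|·|E|)^{O(d)}. -/
/-!
Let the rank of a vertex `v` be the maximal length of a diamond sequence whose first source is
reachable from `v`. Ranks do not increase along edges and drop strictly across a diamond. Two
distinct paths with common endpoints `a`, `x` enclose a diamond lying between `a` and `x`, so there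
is at most one path between two vertices of equal rank. Hence a path is determined by its edges
across which the rank drops; there are at most `d` of them, which leaves at most `(|E| + 1)^d`
paths.
-/

/-- `IsPath E z z' p`: `p` is a (vertex sequence of a) path in the digraph with
edge set `E` from `z` to `z'`. -/
def IsPath {V : Type*} (E : Finset (V × V)) (z z' : V) (p : List V) : Prop :=
  p.head? = some z ∧ p.getLast? = some z' ∧ p.Chain' (fun u v => (u, v) ∈ E)

/-- `z'` is reachable from `z` (possibly `z' = z`). -/
def Reach {V : Type*} (E : Finset (V × V)) (z z' : V) : Prop :=
  ∃ p, IsPath E z z' p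

/-- The digraph is acyclic: there is no nontrivial path from a vertex to itself. -/
def Acyclic {V : Type*} (E : Finset (V × V)) : Prop :=
  ¬ ∃ (v : V) (p : List V), p ≠ [] ∧
    List.Chain (fun u w => (u, w) ∈ E) v p ∧ p.getLast? = some v

/-- A diamond from `v` to `v'`: a pair of distinct simple paths from `v` to `v'`
that are vertex-disjoint except at the endpoints. -/
def IsDiamond {V : Type*} (E : Finset (V × V)) (v v' : V) : Prop :=
  ∃ p₁ p₂, IsPath E v v' p₁ ∧ IsPath E v v' p₂ ∧ p₁.Nodup ∧ p₂.Nodup ∧ p₁ ≠ p₂ ∧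
    ∀ x ∈ p₁, x ∈ p₂ → x = v ∨ x = v'

/-- A sequence of diamonds (given by their source/destination pairs) in which each
diamond's source is reachable from the previous diamond's destination. -/
def IsDiamondSeq {V : Type*} (E : Finset (V × V)) (l : List (V × V)) : Prop :=
  (∀ pr ∈ l, IsDiamond E pr.1 pr.2) ∧ l.Chain' (fun pr qr => Reach E pr.2 qr.1)

section Paths
variable {V : Type*} {E : Finset (V × V)}

theorem IsPath.exists_eq_cons {a x : V} {p : List V} (h : IsPath E a x p) :
    ∃ t, p = a :: t := by
  obtain ⟨h₁, -, -⟩ := h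
  cases p with
  | nil => simp at h₁
  | cons b t => exact ⟨t, by simpa using h₁⟩

theorem isPath_singleton_iff {a x : V} : IsPath E a x [a] ↔ a = x := by
  simp [IsPath, List.Chain']

theorem isPath_cons_cons_iff {a b x : V} {t : List V} :
    IsPath E a x (a :: b :: t) ↔ (a, b) ∈ E ∧ IsPath E b x (b :: t) := by
  simp [IsPath, List.Chain', List.isChain_cons_cons, and_left_comm]

theorem IsPath.prefix {a x u : V} {s t : List V} (h : IsPath E a x (s ++ u :: t)) :
    IsPath E a u (s ++ [u]) := by
  obtain ⟨h₁, -, h₃⟩ := h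
  refine ⟨?_, by simp, h₃.prefix ⟨t, by simp⟩⟩
  cases s <;> simpa using h₁

theorem IsPath.suffix {a x u : V} {s t : List V} (h : IsPath E a x (s ++ u :: t)) :
    IsPath E u x (u :: t) := by
  obtain ⟨-, h₂, h₃⟩ := h
  refine ⟨rfl, ?_, h₃.suffix ⟨s, rfl⟩⟩
  rwa [List.getLast?_append_of_ne_nil _ (by simp)] at h₂

theorem IsPath.edges_nonempty {a x : V} {p : List V} (h : IsPath E a x p) (hax : a ≠ x) :
    E.Nonempty := by
  obtain ⟨t, rfl⟩ := h.exists_eq_cons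
  cases t with
  | nil => exact absurd (isPath_singleton_iff.1 h) hax
  | cons b t => exact ⟨_, (isPath_cons_cons_iff.1 h).1⟩

theorem reach_refl (v : V) : Reach E v v :=
  ⟨[v], isPath_singleton_iff.2 rfl⟩

theorem Reach.cons {a b c : V} (hab : (a, b) ∈ E) (hbc : Reach E b c) : Reach E a c := by
  obtain ⟨p, hp⟩ := hbc
  obtain ⟨t, rfl⟩ := hp.exists_eq_cons
  exact ⟨a :: b :: t, isPath_cons_cons_iff.2 ⟨hab, hp⟩⟩

theorem Reach.trans {a b c : V} (hab : Reach E a b) (hbc : Reach E b c) : Reach E a c := by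
  obtain ⟨p, hp⟩ := hab
  obtain ⟨t, rfl⟩ := hp.exists_eq_cons
  induction t generalizing a with
  | nil => rwa [isPath_singleton_iff.1 hp]
  | cons b t ih =>
    obtain ⟨hab, hp⟩ := isPath_cons_cons_iff.1 hp
    exact .cons hab (ih hp)

theorem Acyclic.not_isPath_cons_self (hac : Acyclic E) {a b : V} {t : List V} :
    ¬ IsPath E a a (a :: b :: t) :=
  fun ⟨_, hlast, hchain⟩ => hac ⟨a, b :: t, by simp, hchain, by simpa using hlast⟩

theorem Acyclic.nodup_of_isChain (hac : Acyclic E) {p : List V}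
    (hp : p.IsChain fun u v => (u, v) ∈ E) : p.Nodup := by
  induction p with
  | nil => simp
  | cons a t ih =>
    refine List.nodup_cons.2 ⟨fun ha => ?_, ih hp.tail⟩
    obtain ⟨s, t', rfl⟩ := List.append_of_mem ha
    exact hac ⟨a, s ++ [a], by simp, hp.prefix ⟨t', by simp⟩, by simp⟩

theorem IsPath.nodup (hac : Acyclic E) {a x : V} {p : List V} (h : IsPath E a x p) : p.Nodup :=
  hac.nodup_of_isChain h.2.2

end Paths

section Diamonds
variable {V : Type*} {E : Finset (V × V)}

theorem IsPath.mem_tail {a b x : V} {p : List V} (h : IsPath E a x (a :: b :: p)) :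
    x ∈ b :: p :=
  List.mem_of_mem_getLast? (List.getLast?_cons_cons ▸ h.2.1)

theorem exists_isDiamond_of_fork (hac : Acyclic E) {a b c x : V} {p q : List V}
    (hp : IsPath E a x (a :: b :: p)) (hq : IsPath E a x (a :: c :: q)) (hbc : b ≠ c) :
    ∃ u, IsDiamond E a u ∧ Reach E u x := by
  classical
  -- `u` is the first vertex of `b :: p` on `c :: q`, so the two segments up to `u` meet only
  -- at `a` and `u`.
  obtain ⟨u, hfind⟩ : ∃ u, (b :: p).find? (· ∈ c :: q) = some u :=
    Option.ne_none_iff_exists'.1 fun h =>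
      List.find?_eq_none.1 h x hp.mem_tail (by simpa using hq.mem_tail)
  obtain ⟨hu, s₁, t₁, hp_eq, hs₁⟩ := List.find?_eq_some_iff_append.1 hfind
  obtain ⟨s₂, t₂, hq_eq⟩ := List.append_of_mem (of_decide_eq_true hu)
  have hp' : IsPath E a x ((a :: s₁) ++ u :: t₁) := by rw [hp_eq] at hp; exact hp
  have hq' : IsPath E a x ((a :: s₂) ++ u :: t₂) := by rw [hq_eq] at hq; exact hq
  have head₁ : (s₁ ++ [u]).head? = some b := by
    simpa [List.head?_append] using (congrArg List.head? hp_eq).symm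
  have head₂ : (s₂ ++ [u]).head? = some c := by
    simpa [List.head?_append] using (congrArg List.head? hq_eq).symm
  refine ⟨u, ⟨_, _, hp'.prefix, hq'.prefix, hp'.prefix.nodup hac, hq'.prefix.nodup hac,
    fun h => hbc ?_, fun y hy₁ hy₂ => ?_⟩, _, hp'.suffix⟩
  · simp only [List.cons_append, List.cons.injEq, true_and] at h
    simpa [h, head₂] using head₁.symm
  · simp only [List.cons_append, List.mem_cons, List.mem_append, List.not_mem_nil,
      or_false] at hy₁ hy₂
    rcases hy₁ with rfl | hy₁ | rfl
    · exact .inl rfl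
    rcases hy₂ with rfl | hy₂ | rfl
    · exact .inl rfl
    · exact absurd (hq_eq ▸ List.mem_append_left _ hy₂) (by simpa using hs₁ y hy₁)
    · exact .inr rfl
    · exact .inr rfl

theorem exists_isDiamond_of_ne (hac : Acyclic E) {a x : V} {p q : List V}
    (hp : IsPath E a x p) (hq : IsPath E a x q) (hpq : p ≠ q) :
    ∃ v u, IsDiamond E v u ∧ Reach E a v ∧ Reach E u x := by
  obtain ⟨p, rfl⟩ := hp.exists_eq_cons
  obtain ⟨q, rfl⟩ := hq.exists_eq_cons
  induction p generalizing a q with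
  | nil =>
    cases q with
    | nil => exact absurd rfl hpq
    | cons c q =>
      rw [isPath_singleton_iff.1 hp] at hq
      exact absurd hq hac.not_isPath_cons_self
  | cons b p ih =>
    cases q with
    | nil =>
      rw [isPath_singleton_iff.1 hq] at hp
      exact absurd hp hac.not_isPath_cons_self
    | cons c q =>
      by_cases hbc : b = c
      · subst hbc
        obtain ⟨hab, hp⟩ := isPath_cons_cons_iff.1 hp
        obtain ⟨v, u, hvu, hbv, hux⟩ :=
          ih (q := q) hp (isPath_cons_cons_iff.1 hq).2 fun h => hpq (by rw [h])
        exact ⟨v, u, hvu, hbv.cons hab, hux⟩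
      · obtain ⟨u, hau, hux⟩ := exists_isDiamond_of_fork hac hp hq hbc
        exact ⟨a, u, hau, reach_refl a, hux⟩

end Diamonds

section DiamondRank
variable {V : Type*}

def DiamondIndexLE (E : Finset (V × V)) (d : ℕ) : Prop :=
  ∀ l : List (V × V), IsDiamondSeq E l → l.length ≤ d

def diamondSeqLengthsFrom (E : Finset (V × V)) (v : V) : Set ℕ :=
  {n | ∃ l : List (V × V), IsDiamondSeq E l ∧ l.length = n ∧ ∀ pr ∈ l.head?, Reach E v pr.1}

/-- Meaningful only under `DiamondIndexLE E d`: an unbounded `sSup` in `ℕ` is `0`. -/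
noncomputable def diamondRank (E : Finset (V × V)) (v : V) : ℕ :=
  sSup (diamondSeqLengthsFrom E v)

variable {E : Finset (V × V)} {d : ℕ}

theorem zero_mem_diamondSeqLengthsFrom (v : V) : 0 ∈ diamondSeqLengthsFrom E v :=
  ⟨[], ⟨by simp, List.isChain_nil⟩, rfl, by simp⟩

theorem DiamondIndexLE.bddAbove (hd : DiamondIndexLE E d) (v : V) :
    BddAbove (diamondSeqLengthsFrom E v) :=
  ⟨d, by rintro n ⟨l, hl, rfl, -⟩; exact hd l hl⟩

theorem DiamondIndexLE.diamondRank_le (hd : DiamondIndexLE E d) (v : V) :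
    diamondRank E v ≤ d :=
  csSup_le ⟨0, zero_mem_diamondSeqLengthsFrom v⟩ fun _ ⟨l, hl, hn, _⟩ => hn ▸ hd l hl

theorem Reach.diamondRank_le (hd : DiamondIndexLE E d) {v w : V} (h : Reach E v w) :
    diamondRank E w ≤ diamondRank E v :=
  csSup_le_csSup (hd.bddAbove v) ⟨0, zero_mem_diamondSeqLengthsFrom w⟩
    fun _ ⟨l, hl, hn, hw⟩ => ⟨l, hl, hn, fun pr hpr => h.trans (hw pr hpr)⟩

theorem IsDiamond.diamondRank_lt (hd : DiamondIndexLE E d) {v u : V} (h : IsDiamond E v u) :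
    diamondRank E u < diamondRank E v := by
  obtain ⟨l, hl, hlen, hu⟩ := Nat.sSup_mem ⟨0, zero_mem_diamondSeqLengthsFrom u⟩ (hd.bddAbove u)
  have hmem : diamondRank E u + 1 ∈ diamondSeqLengthsFrom E v := by
    refine ⟨(v, u) :: l, ⟨?_, hl.2.cons hu⟩, by simp [hlen, diamondRank], ?_⟩
    · rintro pr (_ | ⟨_, hpr⟩)
      exacts [h, hl.1 pr hpr]
    · simpa using reach_refl v
  exact le_csSup (hd.bddAbove v) hmem

end DiamondRank

section DropEdges
variable {V : Type*} {E : Finset (V × V)} {d : ℕ}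

theorem eq_of_isPath_of_diamondRank_le (hac : Acyclic E) (hd : DiamondIndexLE E d)
    {a x : V} {p q : List V} (hp : IsPath E a x p) (hq : IsPath E a x q)
    (hax : diamondRank E a ≤ diamondRank E x) : p = q := by
  by_contra hpq
  obtain ⟨v, u, hvu, hav, hux⟩ := exists_isDiamond_of_ne hac hp hq hpq
  have := hvu.diamondRank_lt hd
  have := hav.diamondRank_le hd
  have := hux.diamondRank_le hd
  omega

noncomputable def dropEdges (E : Finset (V × V)) : List V → List (V × V)
  | a :: b :: t =>
    if diamondRank E b < diamondRank E a then (a, b) :: dropEdges E (b :: t)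
    else dropEdges E (b :: t)
  | _ => []

theorem IsPath.mem_of_mem_dropEdges {a x : V} {p : List V} (hp : IsPath E a x p)
    {e : V × V} (he : e ∈ dropEdges E p) : e ∈ E := by
  obtain ⟨t, rfl⟩ := hp.exists_eq_cons
  induction t generalizing a with
  | nil => simp [dropEdges] at he
  | cons b t ih =>
    obtain ⟨hab, hp⟩ := isPath_cons_cons_iff.1 hp
    rw [dropEdges] at he
    split_ifs at he
    · rcases List.mem_cons.1 he with rfl | he
      exacts [hab, ih hp he]
    · exact ih hp he

theorem IsPath.length_dropEdges_add_le (hd : DiamondIndexLE E d) {a x : V} {p : List V}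
    (hp : IsPath E a x p) : (dropEdges E p).length + diamondRank E x ≤ diamondRank E a := by
  obtain ⟨t, rfl⟩ := hp.exists_eq_cons
  induction t generalizing a with
  | nil => simp [dropEdges, isPath_singleton_iff.1 hp]
  | cons b t ih =>
    obtain ⟨hab, hp⟩ := isPath_cons_cons_iff.1 hp
    have hba := ((reach_refl b).cons hab).diamondRank_le hd
    have := ih hp
    rw [dropEdges]
    split_ifs
    · rw [List.length_cons]; omega
    · omega

theorem IsPath.length_dropEdges_le (hd : DiamondIndexLE E d) {a x : V} {p : List V}
    (hp : IsPath E a x p) : (dropEdges E p).length ≤ d :=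
  (Nat.le_of_add_right_le (hp.length_dropEdges_add_le hd)).trans (hd.diamondRank_le a)

theorem IsPath.diamondRank_le_of_dropEdges_eq_nil {a x : V} {p : List V} (hp : IsPath E a x p)
    (h : dropEdges E p = []) : diamondRank E a ≤ diamondRank E x := by
  obtain ⟨t, rfl⟩ := hp.exists_eq_cons
  induction t generalizing a with
  | nil => rw [isPath_singleton_iff.1 hp]
  | cons b t ih =>
    rw [dropEdges] at h
    split_ifs at h with hab
    exact (not_lt.1 hab).trans (ih (isPath_cons_cons_iff.1 hp).2 h)

theorem dropEdges_eq_cons {p : List V} {e : V × V} {rest : List (V × V)}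
    (h : dropEdges E p = e :: rest) :
    ∃ s t, p = s ++ e.1 :: e.2 :: t ∧ dropEdges E (s ++ [e.1]) = [] ∧
      dropEdges E (e.2 :: t) = rest := by
  induction p with
  | nil => simp [dropEdges] at h
  | cons a t ih =>
    cases t with
    | nil => simp [dropEdges] at h
    | cons b t =>
      rw [dropEdges] at h
      split_ifs at h with hab
      · obtain ⟨rfl, rfl⟩ := List.cons_eq_cons.1 h
        exact ⟨[], t, rfl, by simp [dropEdges], rfl⟩
      · obtain ⟨s, t', hbt, hnil, hrest⟩ := ih h
        obtain ⟨c, s', hs'⟩ := List.exists_cons_of_ne_nil (List.concat_ne_nil e.1 s)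
        obtain rfl : c = b := by
          simpa [hs'] using (congrArg List.head? (hbt.trans (List.append_cons _ _ _))).symm
        refine ⟨a :: s, t', by rw [hbt]; rfl, ?_, hrest⟩
        rw [List.cons_append, hs', dropEdges, if_neg hab, ← hs', hnil]

theorem eq_of_dropEdges_eq (hac : Acyclic E) (hd : DiamondIndexLE E d) {a x : V}
    {p q : List V} (hp : IsPath E a x p) (hq : IsPath E a x q)
    (h : dropEdges E p = dropEdges E q) : p = q := by
  generalize hl : dropEdges E p = l at h
  induction l generalizing a p q with
  | nil =>
    exact eq_of_isPath_of_diamondRank_le hac hd hp hq (hp.diamondRank_le_of_dropEdges_eq_nil hl)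
  | cons e rest ih =>
    obtain ⟨s₁, t₁, rfl, hnil₁, hrest₁⟩ := dropEdges_eq_cons hl
    obtain ⟨s₂, t₂, rfl, -, hrest₂⟩ := dropEdges_eq_cons h.symm
    have hs : s₁ = s₂ := List.append_cancel_right <| eq_of_isPath_of_diamondRank_le hac hd
      hp.prefix hq.prefix (hp.prefix.diamondRank_le_of_dropEdges_eq_nil hnil₁)
    rw [← List.singleton_append, ← List.append_assoc] at hp hq
    have ht := ih hp.suffix hq.suffix hrest₁ hrest₂.symm
    rw [hs, List.cons.inj ht |>.2]

end DropEdges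

theorem Set.ncard_le_card_add_one_pow_of_injOn {α β : Type*} {S : Set β} (s : Finset α) (d : ℕ)
    (f : β → List α) (hlen : ∀ b ∈ S, (f b).length ≤ d) (hmem : ∀ b ∈ S, ∀ x ∈ f b, x ∈ s)
    (hf : S.InjOn f) : S.ncard ≤ (s.card + 1) ^ d := by
  classical
  -- A list of length at most `d` is determined by its first `d` entries, padded with `none`.
  let code : β → Fin d → Option α := fun b i => (f b)[(i : ℕ)]?
  have hcode : S.InjOn code := fun b hb b' hb' h => hf hb hb' <| List.ext_getElem? fun n => by
    by_cases hn : n < d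
    · exact congrFun h ⟨n, hn⟩
    · rw [List.getElem?_eq_none (by grind), List.getElem?_eq_none (by grind)]
  calc S.ncard
      ≤ (Fintype.piFinset fun _ : Fin d => s.insertNone : Set (Fin d → Option α)).ncard :=
        Set.ncard_le_ncard_of_injOn code (fun b hb => by
          simpa [code, Finset.mem_insertNone] using fun i x hx =>
            hmem b hb x (List.mem_of_getElem? hx)) hcode
    _ = (s.card + 1) ^ d := by
      rw [Set.ncard_coe_finset, Fintype.card_piFinset]; simp

/-- In a DAG in which every vertex has out-degree at most 2 and whose diamond
index is bounded by `d`, the number of distinct paths between any two fixed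
distinct vertices `z`, `z'` is at most `(|V|·|E|)^{O(d)}`. -/
theorem paths_le_of_diamondIndex :
    ∃ c : ℕ, ∀ (V : Type) [Fintype V] [DecidableEq V] (E : Finset (V × V)) (d : ℕ),
      Acyclic E →
      (∀ v : V, (E.filter fun e => e.1 = v).card ≤ 2) →
      (∀ l : List (V × V), IsDiamondSeq E l → l.length ≤ d) →
      ∀ z z' : V, z ≠ z' →
        {p : List V | IsPath E z z' p}.ncard ≤
          (Fintype.card V * E.card) ^ (c * d + c) := by
  refine ⟨1, fun V _ _ E d hac _ (hd : DiamondIndexLE E d) z z' hzz' => ?_⟩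
  rcases Set.eq_empty_or_nonempty {p : List V | IsPath E z z' p} with hS | ⟨p, hp⟩
  · simp [hS]
  have hE : 1 ≤ E.card := (hp.edges_nonempty hzz').card_pos
  have hV : 2 ≤ Fintype.card V := Fintype.one_lt_card_iff_nontrivial.2 ⟨z, z', hzz'⟩
  calc {p : List V | IsPath E z z' p}.ncard ≤ (E.card + 1) ^ d :=
        Set.ncard_le_card_add_one_pow_of_injOn E d (dropEdges E)
          (fun q hq => hq.length_dropEdges_le hd)
          (fun q hq _ he => hq.mem_of_mem_dropEdges he)
          fun _ hq _ hq' => eq_of_dropEdges_eq hac hd hq hq'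
    _ ≤ (Fintype.card V * E.card) ^ d := Nat.pow_le_pow_left (by nlinarith) d
    _ ≤ (Fintype.card V * E.card) ^ (1 * d + 1) :=
      Nat.pow_le_pow_right (by positivity) (by omega)
end
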